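/- Let μ_k, μ be finite measures on ℝ³, H_k ∈ L²(μ_k; ℝ³) with sup_k ‖H_k‖_{L²(μ_k)} < ∞ and (μ_k, H_k) ⇀ (μ, H) weakly as measure-function pairs in L², and let b_k, b be μ_k- resp. μ-measurable functions with 0 < c ≤ b_k, b ≤ C and (μ_k, √b_k) → (μ, √b) strongly as measure-function pairs in L². Then ∫ b |H|² dμ ≤ liminf_k ∫ b_k |H_k|² dμ_k. -/

import Mathlib

/-!
Write `F_k = √b_k • H_k`, so that the energies are `∫ ‖F_k‖² dμ_k`. Since `√b_k` converges
strongly and `H_k` weakly with bounded `L²` norms, the products converge weakly: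
`∫ ⟪F_k, φ⟫ dμ_k → ∫ ⟪F, φ⟫ dμ` for every `φ ∈ C_c`. To see this, replace `√b_k` by a bounded
continuous `χ` close to `√b` in `L²(μ)`: the term with `χ` converges by the weak convergence of
`H_k`, and the error is at most `t⁻¹ ∫ ‖φ‖² (√b_k - χ)² dμ_k + t ∫ ‖H_k‖² dμ_k`, whose first part
converges, by the strong convergence, to the small number `t⁻¹ ∫ ‖φ‖² (√b - χ)² dμ`.
Lower semicontinuity then follows from `2 ⟪F, φ⟫ - ‖φ‖² ≤ ‖F‖²` and the density of `C_c` in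
`L²(μ)`, which makes `∫ ‖F‖² dμ` the supremum of `2 ∫ ⟪F, φ⟫ dμ - ∫ ‖φ‖² dμ` over `φ ∈ C_c`.
-/

open MeasureTheory Filter Topology CompactlySupported BoundedContinuousFunction

section L2

variable {α E : Type*} {m : MeasurableSpace α} {ν : Measure α}
  [NormedAddCommGroup E] [InnerProductSpace ℝ E]

theorem MeasureTheory.MemLp.smul_of_abs_le {p : ENNReal} {H : α → E} (hH : MemLp H p ν)
    {w : α → ℝ} (hw : AEStronglyMeasurable w ν) {R : ℝ} (hwR : ∀ x, |w x| ≤ R) :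
    MemLp (fun x => w x • H x) p ν :=
  hH.smul (memLp_top_of_bound hw R (ae_of_all _ hwR))

theorem integral_norm_sq_smul_le {H : α → E} (hH : MemLp H 2 ν) {w : α → ℝ} {R : ℝ}
    (hwR : ∀ x, |w x| ≤ R) :
    ∫ x, ‖w x • H x‖ ^ 2 ∂ν ≤ R ^ 2 * ∫ x, ‖H x‖ ^ 2 ∂ν := by
  rw [← integral_const_mul]
  refine integral_mono_of_nonneg (ae_of_all _ fun x => by positivity)
    ((hH.integrable_norm_pow two_ne_zero).const_mul _) (ae_of_all _ fun x => ?_)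
  dsimp only
  rw [norm_smul, mul_pow, Real.norm_eq_abs, sq_abs]
  have : w x ^ 2 ≤ R ^ 2 := sq_le_sq' (abs_le.1 (hwR x)).1 (abs_le.1 (hwR x)).2
  gcongr

theorem MeasureTheory.MemLp.integrable_inner {F G : α → E} (hF : MemLp F 2 ν)
    (hG : MemLp G 2 ν) : Integrable (fun x => inner ℝ (F x) (G x)) ν :=
  (L2.integrable_inner (hF.toLp F) (hG.toLp G)).congr <| by
    filter_upwards [hF.coeFn_toLp, hG.coeFn_toLp] with x hFx hGx
    rw [hFx, hGx]

theorem integral_norm_sub_sq {F G : α → E} (hF : MemLp F 2 ν) (hG : MemLp G 2 ν) :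
    ∫ x, ‖F x - G x‖ ^ 2 ∂ν =
      ∫ x, ‖F x‖ ^ 2 ∂ν - 2 * ∫ x, inner ℝ (F x) (G x) ∂ν + ∫ x, ‖G x‖ ^ 2 ∂ν := by
  have hF2 := hF.integrable_norm_pow two_ne_zero
  have hFG := (hF.integrable_inner hG).const_mul 2
  simp_rw [norm_sub_sq_real]
  rw [integral_add (f := fun x => ‖F x‖ ^ 2 - 2 * inner ℝ (F x) (G x)) (hF2.sub hFG)
    (hG.integrable_norm_pow two_ne_zero), integral_sub hF2 hFG, integral_const_mul]

theorem two_mul_integral_inner_sub_le {F G : α → E} (hF : MemLp F 2 ν) (hG : MemLp G 2 ν) :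
    2 * ∫ x, inner ℝ (F x) (G x) ∂ν - ∫ x, ‖G x‖ ^ 2 ∂ν ≤ ∫ x, ‖F x‖ ^ 2 ∂ν := by
  have := integral_nonneg (μ := ν) (f := fun x => ‖F x - G x‖ ^ 2) fun x => sq_nonneg _
  rw [integral_norm_sub_sq hF hG] at this
  linarith

theorem two_mul_le_inv_mul_sq_add_mul_sq {a b t : ℝ} (ht : 0 < t) :
    2 * (a * b) ≤ t⁻¹ * a ^ 2 + t * b ^ 2 := by
  have hsq : 0 ≤ t⁻¹ * (a - t * b) ^ 2 := by positivity
  have : t⁻¹ * (a - t * b) ^ 2 = t⁻¹ * a ^ 2 + t * b ^ 2 - 2 * (a * b) := by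
    field_simp
    ring
  linarith

theorem two_mul_abs_integral_mul_inner_le {f : α → ℝ} {h φ : α → E}
    (hf : Integrable (fun x => ‖φ x‖ ^ 2 * f x ^ 2) ν)
    (hh : Integrable (fun x => ‖h x‖ ^ 2) ν) {t : ℝ} (ht : 0 < t) :
    2 * |∫ x, f x * inner ℝ (h x) (φ x) ∂ν| ≤
      t⁻¹ * ∫ x, ‖φ x‖ ^ 2 * f x ^ 2 ∂ν + t * ∫ x, ‖h x‖ ^ 2 ∂ν := by
  rw [← integral_const_mul, ← integral_const_mul,
    ← integral_add (hf.const_mul _) (hh.const_mul _), ← abs_two, ← abs_mul,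
    ← integral_const_mul, ← Real.norm_eq_abs]
  refine norm_integral_le_of_norm_le ((hf.const_mul _).add (hh.const_mul _))
    (ae_of_all _ fun x => ?_)
  calc ‖2 * (f x * inner ℝ (h x) (φ x))‖ = 2 * (|f x| * |inner ℝ (h x) (φ x)|) := by
        rw [norm_mul, norm_mul, Real.norm_two, Real.norm_eq_abs, Real.norm_eq_abs]
    _ ≤ 2 * (|f x| * (‖h x‖ * ‖φ x‖)) := by gcongr; exact abs_real_inner_le_norm _ _
    _ = 2 * ((‖φ x‖ * |f x|) * ‖h x‖) := by ring
    _ ≤ t⁻¹ * (‖φ x‖ * |f x|) ^ 2 + t * ‖h x‖ ^ 2 := two_mul_le_inv_mul_sq_add_mul_sq ht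
    _ = t⁻¹ * (‖φ x‖ ^ 2 * f x ^ 2) + t * ‖h x‖ ^ 2 := by rw [mul_pow, sq_abs]

end L2

theorem norm_sqrt_smul_sq {E : Type*} [NormedAddCommGroup E] [NormedSpace ℝ E] {β : ℝ}
    (hβ : 0 ≤ β) (v : E) : ‖√β • v‖ ^ 2 = β * ‖v‖ ^ 2 := by
  rw [norm_smul, mul_pow, Real.norm_eq_abs, sq_abs, Real.sq_sqrt hβ]

theorem tendsto_of_forall_approx {ι Z : Type*} [PseudoMetricSpace Z] {l : Filter ι}
    {a : ι → Z} {a₀ : Z}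
    (h : ∀ ε > 0, ∃ c : ι → Z, ∃ c₀, Tendsto c l (𝓝 c₀) ∧
      (∀ᶠ i in l, dist (a i) (c i) ≤ ε) ∧ dist a₀ c₀ ≤ ε) :
    Tendsto a l (𝓝 a₀) := by
  refine Metric.tendsto_nhds.2 fun ε hε => ?_
  obtain ⟨c, c₀, hc, hac, hac₀⟩ := h (ε / 4) (by positivity)
  filter_upwards [hac, Metric.tendsto_nhds.1 hc (ε / 4) (by positivity)] with i hai hci
  calc dist (a i) a₀ ≤ dist (a i) (c i) + dist (c i) c₀ + dist c₀ a₀ := dist_triangle4 _ _ _ _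
    _ < ε := by rw [dist_comm c₀]; linarith

section CompactlySupported

variable {X E : Type*} [TopologicalSpace X] [NormedAddCommGroup E]

def CompactlySupportedContinuousMap.normSq (φ : C_c(X, E)) : C_c(X, ℝ) :=
  ⟨⟨fun x => ‖φ x‖ ^ 2, by fun_prop⟩,
    φ.hasCompactSupport.comp_left (g := fun v : E => ‖v‖ ^ 2) (by simp)⟩

@[simp]
theorem CompactlySupportedContinuousMap.normSq_apply (φ : C_c(X, E)) (x : X) :
    φ.normSq x = ‖φ x‖ ^ 2 :=
  rfl

variable [MeasurableSpace X]

theorem tendsto_integral_mul_comp_of_forall_mem {Y ι : Type*} [TopologicalSpace Y]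
    [RegularSpace Y] [LocallyCompactSpace Y] {l : Filter ι} {μ : ι → Measure X}
    {μ₀ : Measure X} {w : ι → X → Y} {w₀ : X → Y} {K : Set Y} (hK : IsCompact K)
    (hw : ∀ i x, w i x ∈ K) (hw₀ : ∀ x, w₀ x ∈ K)
    (hconv : ∀ Φ : C_c(X × Y, ℝ),
      Tendsto (fun i => ∫ x, Φ (x, w i x) ∂μ i) l (𝓝 (∫ x, Φ (x, w₀ x) ∂μ₀)))
    (ψ : C_c(X, ℝ)) (g : C(X × Y, ℝ)) :
    Tendsto (fun i => ∫ x, ψ x * g (x, w i x) ∂μ i) l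
      (𝓝 (∫ x, ψ x * g (x, w₀ x) ∂μ₀)) := by
  -- A cutoff `ζ = 1` on `K` makes `Φ` compactly supported without changing it on the graphs.
  obtain ⟨ζ, hζK, -, hζ, -⟩ :=
    exists_continuous_one_zero_of_isCompact hK isClosed_empty (Set.disjoint_empty K)
  let Φ : C_c(X × Y, ℝ) := ⟨⟨fun p => ψ p.1 * ζ p.2 * g p, by fun_prop⟩, by
    refine HasCompactSupport.intro' (IsCompact.prod ψ.hasCompactSupport hζ)
      ((isClosed_tsupport _).prod (isClosed_tsupport _)) fun p hp => ?_
    rcases not_and_or.1 (Set.mem_prod.not.1 hp) with h | h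
    · simp [image_eq_zero_of_notMem_tsupport h]
    · simp [image_eq_zero_of_notMem_tsupport h]⟩
  have hΦ : ∀ (ν : Measure X) (v : X → Y), (∀ x, v x ∈ K) →
      ∫ x, Φ (x, v x) ∂ν = ∫ x, ψ x * g (x, v x) ∂ν := fun ν v hv =>
    integral_congr_ae (ae_of_all _ fun x => by simp [Φ, hζK (hv x)])
  simpa only [hΦ _ _ hw₀] using (hconv Φ).congr fun i => hΦ _ _ (hw i)

end CompactlySupported

section MeasureFunctionPairs

variable {X E : Type*} [TopologicalSpace X] [MeasurableSpace X]
  [NormedAddCommGroup E] [InnerProductSpace ℝ E]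

theorem exists_boundedContinuous_integral_sq_sub_le [NormalSpace X] [BorelSpace X]
    {ν : Measure X} [ν.WeaklyRegular] {w : X → ℝ} (hw : MemLp w 2 ν) {δ : ℝ} (hδ : 0 < δ) :
    ∃ χ : X →ᵇ ℝ, Integrable (fun x => (w x - χ x) ^ 2) ν ∧
      ∫ x, (w x - χ x) ^ 2 ∂ν ≤ δ := by
  obtain ⟨χ, hχδ, hχ⟩ := (show MemLp w (ENNReal.ofReal 2) ν by simpa using hw)
    |>.exists_boundedContinuous_integral_rpow_sub_le two_pos hδ
  have hsq : ∀ x, ‖w x - χ x‖ ^ (2 : ℝ) = (w x - χ x) ^ 2 := fun x => by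
    rw [Real.rpow_two, Real.norm_eq_abs, sq_abs]
  refine ⟨χ, ?_, by simpa only [hsq] using hχδ⟩
  simpa only [Pi.sub_apply, Real.norm_eq_abs, sq_abs] using
    (hw.sub (by simpa using hχ)).integrable_norm_pow two_ne_zero

theorem two_mul_abs_integral_inner_smul_sub_le [OpensMeasurableSpace X] {ν : Measure X}
    [IsFiniteMeasureOnCompacts ν] {H : X → E} (hH : MemLp H 2 ν) {w : X → ℝ}
    (hw : AEStronglyMeasurable w ν) {R : ℝ} (hwR : ∀ x, |w x| ≤ R) (χ : X →ᵇ ℝ)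
    (φ : C_c(X, E)) {t : ℝ} (ht : 0 < t) :
    2 * |∫ x, inner ℝ (w x • H x) (φ x) ∂ν - ∫ x, inner ℝ (H x) ((χ • φ) x) ∂ν| ≤
      t⁻¹ * ∫ x, ‖φ x‖ ^ 2 * (w x - χ x) ^ 2 ∂ν + t * ∫ x, ‖H x‖ ^ 2 ∂ν := by
  have hφ : MemLp φ 2 ν := φ.continuous.memLp_of_hasCompactSupport φ.hasCompactSupport
  have hχφ : MemLp (χ • φ) 2 ν :=
    (χ • φ).continuous.memLp_of_hasCompactSupport (χ • φ).hasCompactSupport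
  have hdiff : Integrable (fun x => ‖φ x‖ ^ 2 * (w x - χ x) ^ 2) ν := by
    refine (((hφ.smul_of_abs_le hw hwR).sub hχφ).integrable_norm_pow two_ne_zero).congr
      (ae_of_all _ fun x => ?_)
    simp only [Pi.sub_apply, CompactlySupportedContinuousMap.smulc_apply, ← sub_smul,
      norm_smul, mul_pow, Real.norm_eq_abs, sq_abs, mul_comm]
  rw [← integral_sub ((hH.smul_of_abs_le hw hwR).integrable_inner hφ) (hH.integrable_inner hχφ)]
  convert two_mul_abs_integral_mul_inner_le hdiff (hH.integrable_norm_pow two_ne_zero) ht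
    using 5 with x
  simp only [CompactlySupportedContinuousMap.smulc_apply, real_inner_smul_left,
    real_inner_smul_right]
  ring

theorem tendsto_integral_inner_smul_of_tendsto [NormalSpace X] [BorelSpace X] {ι : Type*}
    {l : Filter ι} {μ : ι → Measure X} {μ₀ : Measure X} [∀ i, IsFiniteMeasureOnCompacts (μ i)]
    [IsFiniteMeasure μ₀] [μ₀.WeaklyRegular] {H : ι → X → E} {H₀ : X → E}
    {w : ι → X → ℝ} {w₀ : X → ℝ} {C₀ R : ℝ}
    (hH : ∀ i, MemLp (H i) 2 (μ i)) (hH₀ : MemLp H₀ 2 μ₀)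
    (hHC₀ : ∀ i, ∫ x, ‖H i x‖ ^ 2 ∂μ i ≤ C₀)
    (hw : ∀ i, AEStronglyMeasurable (w i) (μ i)) (hw₀ : AEStronglyMeasurable w₀ μ₀)
    (hwR : ∀ i x, |w i x| ≤ R) (hw₀R : ∀ x, |w₀ x| ≤ R)
    (hHconv : ∀ φ : C_c(X, E), Tendsto (fun i => ∫ x, inner ℝ (H i x) (φ x) ∂μ i) l
      (𝓝 (∫ x, inner ℝ (H₀ x) (φ x) ∂μ₀)))
    (hwconv : ∀ Φ : C_c(X × ℝ, ℝ), Tendsto (fun i => ∫ x, Φ (x, w i x) ∂μ i) l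
      (𝓝 (∫ x, Φ (x, w₀ x) ∂μ₀)))
    (φ : C_c(X, E)) :
    Tendsto (fun i => ∫ x, inner ℝ (w i x • H i x) (φ x) ∂μ i) l
      (𝓝 (∫ x, inner ℝ (w₀ x • H₀ x) (φ x) ∂μ₀)) := by
  set M := ‖φ.toBoundedContinuousFunction‖
  set D₀ := ∫ x, ‖H₀ x‖ ^ 2 ∂μ₀
  refine tendsto_of_forall_approx fun ε hε => ?_
  obtain ⟨t, ht, htε⟩ := exists_pos_mul_lt hε (max C₀ D₀)
  obtain ⟨δ, hδ, hδε⟩ := exists_pos_mul_lt hε (t⁻¹ * M ^ 2)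
  obtain ⟨χ, hχ, hχδ⟩ := exists_boundedContinuous_integral_sq_sub_le
    (MemLp.of_bound hw₀ R (ae_of_all _ hw₀R)) hδ
  set D := ∫ x, ‖φ x‖ ^ 2 * (w₀ x - χ x) ^ 2 ∂μ₀
  have hDδ : D ≤ M ^ 2 * δ := by
    calc D ≤ ∫ x, M ^ 2 * (w₀ x - χ x) ^ 2 ∂μ₀ :=
          integral_mono_of_nonneg (ae_of_all _ fun x => by positivity) (hχ.const_mul _)
            (ae_of_all _ fun x => by
              have : ‖φ x‖ ≤ M := φ.toBoundedContinuousFunction.norm_coe_le_norm x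
              dsimp only
              gcongr)
      _ ≤ M ^ 2 * δ := by rw [integral_const_mul]; gcongr
  have hg : Continuous fun p : X × ℝ => (p.2 - χ p.1) ^ 2 := by fun_prop
  have hDconv : Tendsto (fun i => ∫ x, ‖φ x‖ ^ 2 * (w i x - χ x) ^ 2 ∂μ i) l (𝓝 D) :=
    tendsto_integral_mul_comp_of_forall_mem isCompact_Icc (fun i x => abs_le.1 (hwR i x))
      (fun x => abs_le.1 (hw₀R x)) hwconv φ.normSq ⟨_, hg⟩
  have htD : t⁻¹ * D < ε := by
    calc t⁻¹ * D ≤ t⁻¹ * (M ^ 2 * δ) := by gcongr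
      _ < ε := by rwa [← mul_assoc]
  refine ⟨_, _, hHconv (χ • φ), ?_, ?_⟩
  · filter_upwards [(hDconv.const_mul t⁻¹).eventually_lt_const htD] with i hi
    have herr := two_mul_abs_integral_inner_smul_sub_le (hH i) (hw i) (hwR i) χ φ ht
    have hH2 : t * ∫ x, ‖H i x‖ ^ 2 ∂μ i ≤ t * max C₀ D₀ := by
      gcongr; exact (hHC₀ i).trans (le_max_left _ _)
    rw [Real.dist_eq]
    linarith
  · have herr := two_mul_abs_integral_inner_smul_sub_le hH₀ hw₀ hw₀R χ φ ht
    have hH2 : t * D₀ ≤ t * max C₀ D₀ := by gcongr; exact le_max_right _ _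
    rw [Real.dist_eq]
    linarith

theorem exists_integral_norm_sq_le_two_mul_integral_inner_sub_add [NormalSpace X] [R1Space X]
    [WeaklyLocallyCompactSpace X] [BorelSpace X] {ν : Measure X} [ν.Regular] {F : X → E}
    (hF : MemLp F 2 ν) {ε : ℝ} (hε : 0 < ε) :
    ∃ φ : C_c(X, E),
      ∫ x, ‖F x‖ ^ 2 ∂ν ≤ 2 * ∫ x, inner ℝ (F x) (φ x) ∂ν - ∫ x, ‖φ x‖ ^ 2 ∂ν + ε := by
  obtain ⟨g, hgc, hgε, hg, -⟩ := (show MemLp F (ENNReal.ofReal 2) ν by simpa using hF)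
    |>.exists_hasCompactSupport_integral_rpow_sub_le two_pos hε
  refine ⟨⟨⟨g, hg⟩, hgc⟩, ?_⟩
  have := integral_norm_sub_sq hF (hg.memLp_of_hasCompactSupport hgc)
  simp only [Real.rpow_two] at hgε
  change _ ≤ 2 * ∫ x, inner ℝ (F x) (g x) ∂ν - ∫ x, ‖g x‖ ^ 2 ∂ν + ε
  linarith

theorem integral_norm_sq_le_liminf [NormalSpace X] [R1Space X] [WeaklyLocallyCompactSpace X]
    [BorelSpace X] {ι : Type*} {l : Filter ι} [l.NeBot]
    {μ : ι → Measure X} {μ₀ : Measure X} [∀ i, IsFiniteMeasureOnCompacts (μ i)] [μ₀.Regular]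
    {F : ι → X → E} {F₀ : X → E} {B : ℝ}
    (hF : ∀ i, MemLp (F i) 2 (μ i)) (hF₀ : MemLp F₀ 2 μ₀)
    (hFB : ∀ i, ∫ x, ‖F i x‖ ^ 2 ∂μ i ≤ B)
    (hμconv : ∀ ψ : C_c(X, ℝ), Tendsto (fun i => ∫ x, ψ x ∂μ i) l (𝓝 (∫ x, ψ x ∂μ₀)))
    (hFconv : ∀ φ : C_c(X, E), Tendsto (fun i => ∫ x, inner ℝ (F i x) (φ x) ∂μ i) l
      (𝓝 (∫ x, inner ℝ (F₀ x) (φ x) ∂μ₀))) :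
    ∫ x, ‖F₀ x‖ ^ 2 ∂μ₀ ≤ liminf (fun i => ∫ x, ‖F i x‖ ^ 2 ∂μ i) l := by
  refine le_of_forall_pos_le_add fun ε hε => ?_
  obtain ⟨φ, hφ⟩ := exists_integral_norm_sq_le_two_mul_integral_inner_sub_add hF₀ hε
  have hlim : Tendsto (fun i => 2 * ∫ x, inner ℝ (F i x) (φ x) ∂μ i - ∫ x, ‖φ x‖ ^ 2 ∂μ i) l
      (𝓝 (2 * ∫ x, inner ℝ (F₀ x) (φ x) ∂μ₀ - ∫ x, ‖φ x‖ ^ 2 ∂μ₀)) :=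
    ((hFconv φ).const_mul 2).sub (hμconv φ.normSq)
  have hle : 2 * ∫ x, inner ℝ (F₀ x) (φ x) ∂μ₀ - ∫ x, ‖φ x‖ ^ 2 ∂μ₀ ≤
      liminf (fun i => ∫ x, ‖F i x‖ ^ 2 ∂μ i) l := by
    rw [← hlim.liminf_eq]
    refine liminf_le_liminf (Eventually.of_forall fun i => ?_) hlim.isBoundedUnder_ge
      (isCoboundedUnder_ge_of_le l hFB)
    exact two_mul_integral_inner_sub_le (hF i)
      (φ.continuous.memLp_of_hasCompactSupport φ.hasCompactSupport)
  linarith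

end MeasureFunctionPairs

theorem stmt18_general
    (μ : ℕ → Measure (EuclideanSpace ℝ (Fin 3)))
    (μ₀ : Measure (EuclideanSpace ℝ (Fin 3)))
    [∀ k, IsFiniteMeasure (μ k)] [IsFiniteMeasure μ₀]
    (H : ℕ → EuclideanSpace ℝ (Fin 3) → EuclideanSpace ℝ (Fin 3))
    (H₀ : EuclideanSpace ℝ (Fin 3) → EuclideanSpace ℝ (Fin 3))
    (b : ℕ → EuclideanSpace ℝ (Fin 3) → ℝ) (b₀ : EuclideanSpace ℝ (Fin 3) → ℝ)
    (hmeasb : ∀ k, Measurable (b k)) (hmeasb₀ : Measurable b₀)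
    (hH2 : ∀ k, MemLp (H k) 2 (μ k)) (hH₀2 : MemLp H₀ 2 μ₀)
    (C₀ : ℝ) (hL2bd : ∀ k, ∫ x, ‖H k x‖ ^ 2 ∂(μ k) ≤ C₀)
    (c C : ℝ) (hc : 0 < c)
    (hb : ∀ k x, c ≤ b k x ∧ b k x ≤ C) (hb₀ : ∀ x, c ≤ b₀ x ∧ b₀ x ≤ C)
    -- weak-* convergence of the measures
    (hμconv : ∀ φ : C_c(EuclideanSpace ℝ (Fin 3), ℝ),
      Tendsto (fun k => ∫ x, φ x ∂(μ k)) atTop (nhds (∫ x, φ x ∂μ₀)))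
    -- weak convergence of the vector measures μ_k ⌐ H_k
    (hHconv : ∀ φ : C_c(EuclideanSpace ℝ (Fin 3), EuclideanSpace ℝ (Fin 3)),
      Tendsto (fun k => ∫ x, (inner ℝ (H k x) (φ x) : ℝ) ∂(μ k)) atTop
        (nhds (∫ x, (inner ℝ (H₀ x) (φ x) : ℝ) ∂μ₀)))
    -- strong measure-function pair convergence of √b_k
    (hbconv : ∀ φ : C_c((EuclideanSpace ℝ (Fin 3)) × ℝ, ℝ),
      Tendsto (fun k => ∫ x, φ (x, Real.sqrt (b k x)) ∂(μ k)) atTop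
        (nhds (∫ x, φ (x, Real.sqrt (b₀ x)) ∂μ₀))) :
    ∫ x, b₀ x * ‖H₀ x‖ ^ 2 ∂μ₀ ≤
      liminf (fun k => ∫ x, b k x * ‖H k x‖ ^ 2 ∂(μ k)) atTop := by
  have hsqrt_le : ∀ β : ℝ, β ≤ C → |√β| ≤ √C := fun β hβ => by
    rw [abs_of_nonneg (Real.sqrt_nonneg _)]
    exact Real.sqrt_le_sqrt hβ
  have hw : ∀ k, AEStronglyMeasurable (fun x => √(b k x)) (μ k) := fun k =>
    (hmeasb k).sqrt.aestronglyMeasurable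
  have hwC : ∀ k x, |√(b k x)| ≤ √C := fun k x => hsqrt_le _ (hb k x).2
  have hw₀C : ∀ x, |√(b₀ x)| ≤ √C := fun x => hsqrt_le _ (hb₀ x).2
  have henergy : ∀ k x, b k x * ‖H k x‖ ^ 2 = ‖√(b k x) • H k x‖ ^ 2 := fun k x =>
    (norm_sqrt_smul_sq (hc.le.trans (hb k x).1) _).symm
  have henergy₀ : ∀ x, b₀ x * ‖H₀ x‖ ^ 2 = ‖√(b₀ x) • H₀ x‖ ^ 2 := fun x =>
    (norm_sqrt_smul_sq (hc.le.trans (hb₀ x).1) _).symm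
  simp only [henergy, henergy₀]
  exact integral_norm_sq_le_liminf (fun k => (hH2 k).smul_of_abs_le (hw k) (hwC k))
    (hH₀2.smul_of_abs_le hmeasb₀.sqrt.aestronglyMeasurable hw₀C)
    (fun k => (integral_norm_sq_smul_le (hH2 k) (hwC k)).trans
      (mul_le_mul_of_nonneg_left (hL2bd k) (sq_nonneg _)))
    hμconv
    (tendsto_integral_inner_smul_of_tendsto hH2 hH₀2 hL2bd hw hmeasb₀.sqrt.aestronglyMeasurable
      hwC hw₀C hHconv hbconv)

/-- lower semicontinuity of the weighted Willmore-type energy. If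
`(μ_k, H_k) ⇀ (μ, H)` weakly as measure-function pairs in `L²` (weak-* convergence of
`μ_k` and of the vector measures `μ_k ⌐ H_k`, with uniform `L²` bounds) and
`(μ_k, √b_k) → (μ, √b)` strongly as measure-function pairs with `0 < c ≤ b_k, b ≤ C`,
then `∫ b ‖H‖² dμ ≤ liminf_k ∫ b_k ‖H_k‖² dμ_k`. -/
theorem stmt18
    (μ : ℕ → Measure (EuclideanSpace ℝ (Fin 3)))
    (μ₀ : Measure (EuclideanSpace ℝ (Fin 3)))
    [∀ k, IsFiniteMeasure (μ k)] [IsFiniteMeasure μ₀]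
    (H : ℕ → EuclideanSpace ℝ (Fin 3) → EuclideanSpace ℝ (Fin 3))
    (H₀ : EuclideanSpace ℝ (Fin 3) → EuclideanSpace ℝ (Fin 3))
    (b : ℕ → EuclideanSpace ℝ (Fin 3) → ℝ) (b₀ : EuclideanSpace ℝ (Fin 3) → ℝ)
    (hmeasH : ∀ k, Measurable (H k)) (hmeasH₀ : Measurable H₀)
    (hmeasb : ∀ k, Measurable (b k)) (hmeasb₀ : Measurable b₀)
    (hH2 : ∀ k, MemLp (H k) 2 (μ k)) (hH₀2 : MemLp H₀ 2 μ₀)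
    (C₀ : ℝ) (hL2bd : ∀ k, ∫ x, ‖H k x‖ ^ 2 ∂(μ k) ≤ C₀)
    (c C : ℝ) (hc : 0 < c)
    (hb : ∀ k x, c ≤ b k x ∧ b k x ≤ C) (hb₀ : ∀ x, c ≤ b₀ x ∧ b₀ x ≤ C)
    -- weak-* convergence of the measures
    (hμconv : ∀ φ : C_c(EuclideanSpace ℝ (Fin 3), ℝ),
      Tendsto (fun k => ∫ x, φ x ∂(μ k)) atTop (nhds (∫ x, φ x ∂μ₀)))
    -- weak convergence of the vector measures μ_k ⌐ H_k
    (hHconv : ∀ φ : C_c(EuclideanSpace ℝ (Fin 3), EuclideanSpace ℝ (Fin 3)),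
      Tendsto (fun k => ∫ x, (inner ℝ (H k x) (φ x) : ℝ) ∂(μ k)) atTop
        (nhds (∫ x, (inner ℝ (H₀ x) (φ x) : ℝ) ∂μ₀)))
    -- strong measure-function pair convergence of √b_k
    (hbconv : ∀ φ : C_c((EuclideanSpace ℝ (Fin 3)) × ℝ, ℝ),
      Tendsto (fun k => ∫ x, φ (x, Real.sqrt (b k x)) ∂(μ k)) atTop
        (nhds (∫ x, φ (x, Real.sqrt (b₀ x)) ∂μ₀))) :
    ∫ x, b₀ x * ‖H₀ x‖ ^ 2 ∂μ₀ ≤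
      liminf (fun k => ∫ x, b k x * ‖H k x‖ ^ 2 ∂(μ k)) atTop :=
  stmt18_general μ μ₀ H H₀ b b₀ hmeasb hmeasb₀ hH2 hH₀2 C₀ hL2bd c C hc hb hb₀ hμconv hHconv hbconv
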